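/- arXiv:2304.07622 — 3 statements merged into one kernel-verified Lean document; each statement's English description precedes it below -/
import Mathlib

section
/- For every nonempty finite multisubset S ⊆ K, every integer ℓ ≥ 1 and every integer q ≥ 0, setting n = |Ŝ|^ℓ, 𝒮_ℓ := Ŝ^ℓ p₀ for a fixed p₀ ∈ M, and σ^M_ℓ the uniform empirical probability measure on 𝒮_ℓ, the following holds: (1/n) · d_Pr( Φ^{q,n}_{M, ∂_M, σ^M}, Φ^{q,n}_{𝒮_ℓ, ∂_M, σ^M_ℓ} ) ≤ W₁(σ^M, σ^M_ℓ)^{1/2}. -/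
/-!
The stability bound makes `PH q` a `2`-Lipschitz map for the sup metric on `n`-tuples. Peeling
off one coordinate at a time (Fubini) and applying Kantorovich–Rubinstein duality in it bounds
`∫ F d(σM^⊗n) - ∫ F d(σ_ℓ^⊗n)` by `n · Lip(F) · W₁` for every Lipschitz `F`. Testing this on the
`ε`-thickened indicator of a set `A` composed with `PH q`, a `2/ε`-Lipschitz function squeezed
between the indicators of `A` and of its `ε`-thickening, gives `P(A) ≤ Q(A^ε) + 2 n W₁ / ε` for the
two pushforward laws `P`, `Q`, hence a Lévy–Prokhorov distance at most `√(2 n W₁) ≤ n √W₁`, since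
`n ≥ 2`.
-/

open MeasureTheory Metric Real
open scoped ENNReal NNReal

/-- The group element corresponding to a word `w` of length `ℓ` in the alphabet
`Ŝ = S ⊔ S⁻¹`, where the letters of `S` are given by `g : Fin k → K`. -/
def wordProd {K : Type*} [Group K] {k : ℕ} (g : Fin k → K) {ℓ : ℕ}
    (w : Fin ℓ → Fin k × Bool) : K :=
  (List.ofFn fun j => if (w j).2 then g (w j).1 else (g (w j).1)⁻¹).prod

/-- The 1-Wasserstein distance between two Borel measures, via
Kantorovich–Rubinstein duality: the supremum of `∫φ dμ − ∫φ dν` over 1-Lipschitz `φ`. -/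
noncomputable def wasserstein1 {M : Type*} [MetricSpace M] [MeasurableSpace M]
    (μ ν : Measure M) : ℝ :=
  ⨆ φ : {f : M → ℝ // LipschitzWith 1 f}, (∫ x, φ.1 x ∂μ - ∫ x, φ.1 x ∂ν)

/-- The uniform empirical probability measure on the multiset `Ŝ^ℓ p₀`, where the letters of
`S` are `g : Fin k → K`. -/
noncomputable def empiricalMeasure {K : Type*} [Group K] {M : Type*} [MeasurableSpace M]
    [MulAction K M] {k ℓ : ℕ} (g : Fin k → K) (p₀ : M) : Measure M :=
  (Fintype.card (Fin ℓ → Fin k × Bool) : ℝ≥0∞)⁻¹ •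
    ∑ w : Fin ℓ → Fin k × Bool, Measure.dirac (wordProd g w • p₀)

lemma Continuous.integrable_of_compactSpace {X : Type*} [TopologicalSpace X] [CompactSpace X]
    [MeasurableSpace X] [OpensMeasurableSpace X] {μ : Measure X} [IsFiniteMeasure μ]
    {f : X → ℝ} (hf : Continuous f) : Integrable f μ :=
  hf.integrable_of_hasCompactSupport (.of_compactSpace f)

section Wasserstein

variable {M : Type*} [MetricSpace M] [CompactSpace M] [MeasurableSpace M] [BorelSpace M]

lemma abs_integral_sub_le_diam (ρ : Measure M) [IsProbabilityMeasure ρ] {φ : M → ℝ}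
    (hφ : LipschitzWith 1 φ) (x₀ : M) :
    |∫ x, φ x ∂ρ - φ x₀| ≤ diam (Set.univ : Set M) := by
  have hbound : ∀ x, ‖φ x - φ x₀‖ ≤ diam (Set.univ : Set M) := fun x =>
    calc ‖φ x - φ x₀‖ = dist (φ x) (φ x₀) := (dist_eq_norm _ _).symm
      _ ≤ dist x x₀ := by simpa using hφ.dist_le_mul x x₀
      _ ≤ diam (Set.univ : Set M) :=
        dist_le_diam_of_mem isCompact_univ.isBounded trivial trivial
  have h := norm_integral_le_of_norm_le_const (μ := ρ) (Filter.Eventually.of_forall hbound)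
  rwa [integral_sub hφ.continuous.integrable_of_compactSpace (integrable_const _),
    integral_const, probReal_univ, one_smul, mul_one, Real.norm_eq_abs] at h

variable (μ ν : Measure M) [IsProbabilityMeasure μ] [IsProbabilityMeasure ν]

lemma bddAbove_range_integral_sub_integral :
    BddAbove (Set.range fun φ : {f : M → ℝ // LipschitzWith 1 f} =>
      ∫ x, φ.1 x ∂μ - ∫ x, φ.1 x ∂ν) := by
  obtain ⟨x₀⟩ := nonempty_of_isProbabilityMeasure μ
  refine ⟨2 * diam (Set.univ : Set M), ?_⟩
  rintro _ ⟨⟨φ, hφ⟩, rfl⟩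
  have hμ := abs_le.mp (abs_integral_sub_le_diam μ hφ x₀)
  have hν := abs_le.mp (abs_integral_sub_le_diam ν hφ x₀)
  dsimp only
  linarith [hμ.2, hν.1]

lemma integral_sub_integral_le_wasserstein1 {φ : M → ℝ} (hφ : LipschitzWith 1 φ) :
    ∫ x, φ x ∂μ - ∫ x, φ x ∂ν ≤ wasserstein1 μ ν :=
  le_ciSup (bddAbove_range_integral_sub_integral μ ν) ⟨φ, hφ⟩

lemma wasserstein1_nonneg : 0 ≤ wasserstein1 μ ν := by
  simpa using integral_sub_integral_le_wasserstein1 μ ν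
    ((LipschitzWith.const (0 : ℝ)).weaken zero_le_one)

lemma LipschitzWith.integral_sub_integral_le_mul_wasserstein1 {K : ℝ≥0} {φ : M → ℝ}
    (hφ : LipschitzWith K φ) :
    ∫ x, φ x ∂μ - ∫ x, φ x ∂ν ≤ K * wasserstein1 μ ν := by
  rcases eq_or_ne K 0 with rfl | hK
  · obtain ⟨x₀⟩ := nonempty_of_isProbabilityMeasure μ
    have hconst : φ = fun _ => φ x₀ := funext fun x => (LipschitzWith.zero_iff φ).mp hφ x x₀
    rw [hconst]
    simp
  have hK' : (0 : ℝ) < K := by positivity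
  have hscaled : LipschitzWith 1 fun x => (K : ℝ)⁻¹ * φ x :=
    LipschitzWith.of_dist_le_mul fun x y => by
      rw [Real.dist_eq, ← mul_sub, abs_mul, abs_inv, NNReal.abs_eq, NNReal.coe_one, one_mul,
        inv_mul_le_iff₀ hK', ← Real.dist_eq]
      exact hφ.dist_le_mul x y
  have h := integral_sub_integral_le_wasserstein1 μ ν hscaled
  rw [integral_const_mul, integral_const_mul, ← mul_sub, inv_mul_le_iff₀ hK'] at h
  exact h

end Wasserstein

lemma Fin.isometry_uncurry_insertNth {X : Type*} [PseudoMetricSpace X] {n : ℕ} (i : Fin (n + 1)) :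
    Isometry fun p : X × (Fin n → X) => Fin.insertNth (α := fun _ => X) i p.1 p.2 :=
  Isometry.of_dist_eq fun p q => by rw [Fin.dist_insertNth_insertNth, Prod.dist_eq]

lemma lipschitzWith_integral {X Y : Type*} [MeasurableSpace X] [PseudoMetricSpace Y]
    (ρ : Measure X) [IsProbabilityMeasure ρ] {K : ℝ≥0} {F : X → Y → ℝ}
    (hF : ∀ x, LipschitzWith K (F x)) (hint : ∀ y, Integrable (fun x => F x y) ρ) :
    LipschitzWith K fun y => ∫ x, F x y ∂ρ :=
  LipschitzWith.of_dist_le_mul fun y y' => by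
    have hbound : ∀ x, ‖F x y - F x y'‖ ≤ K * dist y y' := fun x => by
      rw [← dist_eq_norm]
      exact (hF x).dist_le_mul y y'
    simpa [Real.dist_eq, ← integral_sub (hint y) (hint y')] using
      norm_integral_le_of_norm_le_const (μ := ρ) (Filter.Eventually.of_forall hbound)

section Tensorization

variable {M : Type*} [MetricSpace M] [CompactSpace M] [MeasurableSpace M] [BorelSpace M]

lemma integral_pi_eq_integral_integral_insertNth (ρ : Measure M) [IsProbabilityMeasure ρ]
    {n : ℕ} (i : Fin (n + 1)) {F : (Fin (n + 1) → M) → ℝ} (hF : Continuous F) :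
    ∫ v, F v ∂(Measure.pi fun _ => ρ) =
      ∫ r, ∫ x, F (i.insertNth x r) ∂ρ ∂(Measure.pi fun _ : Fin n => ρ) := by
  have hmp := measurePreserving_piFinSuccAbove (fun _ : Fin (n + 1) => ρ) i
  have hint : Integrable (fun p : M × (Fin n → M) => F (i.insertNth p.1 p.2))
      (ρ.prod (Measure.pi fun _ => ρ)) :=
    (hF.comp (Fin.isometry_uncurry_insertNth i).continuous).integrable_of_compactSpace
  rw [← integral_prod_symm _ hint, ← hmp.integral_comp']
  congr with v
  exact congrArg F ((Fin.insertNthEquiv (fun _ => M) i).apply_symm_apply v).symm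

variable (μ ν : Measure M) [IsProbabilityMeasure μ] [IsProbabilityMeasure ν]

theorem LipschitzWith.integral_pi_sub_integral_pi_le_mul_wasserstein1 {K : ℝ≥0} :
    ∀ {n : ℕ} {F : (Fin n → M) → ℝ}, LipschitzWith K F →
      ∫ v, F v ∂(Measure.pi fun _ => μ) - ∫ v, F v ∂(Measure.pi fun _ => ν) ≤
        n * (K * wasserstein1 μ ν)
  | 0, F, _ => by simp [integral_unique]
  | n + 1, F, hF => by
    have hslice (r : Fin n → M) : LipschitzWith K fun x => F (Fin.insertNth 0 x r) :=
      .of_dist_le_mul fun x y => (hF.dist_le_mul _ _).trans_eq <| by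
        rw [Fin.dist_insertNth_insertNth, dist_self, max_eq_left dist_nonneg]
    have hfiber (ρ : Measure M) [IsProbabilityMeasure ρ] :
        LipschitzWith K fun r => ∫ x, F (Fin.insertNth 0 x r) ∂ρ := by
      refine lipschitzWith_integral ρ (fun x => .of_dist_le_mul fun r r' => ?_)
        fun r => (hslice r).continuous.integrable_of_compactSpace
      refine (hF.dist_le_mul _ _).trans_eq ?_
      rw [Fin.dist_insertNth_insertNth, dist_self, max_eq_right dist_nonneg]
    set G : (Fin n → M) → ℝ := fun r => ∫ x, F (Fin.insertNth 0 x r) ∂ν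
    have hsplit :
        ∫ v, F v ∂(Measure.pi fun _ => μ) - ∫ v, F v ∂(Measure.pi fun _ => ν) =
          ∫ r, (∫ x, F (Fin.insertNth 0 x r) ∂μ - G r) ∂(Measure.pi fun _ => μ) +
            (∫ r, G r ∂(Measure.pi fun _ => μ) - ∫ r, G r ∂(Measure.pi fun _ => ν)) := by
      rw [integral_pi_eq_integral_integral_insertNth μ 0 hF.continuous,
        integral_pi_eq_integral_integral_insertNth ν 0 hF.continuous,
        integral_sub (hfiber μ).continuous.integrable_of_compactSpace
          (hfiber ν).continuous.integrable_of_compactSpace]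
      ring
    have hfirst : ∫ r, (∫ x, F (Fin.insertNth 0 x r) ∂μ - G r) ∂(Measure.pi fun _ => μ) ≤
        K * wasserstein1 μ ν :=
      calc _ ≤ ∫ _r, K * wasserstein1 μ ν ∂(Measure.pi fun _ : Fin n => μ) :=
            integral_mono
              ((hfiber μ).continuous.sub (hfiber ν).continuous).integrable_of_compactSpace
              (integrable_const _) fun r => (hslice r).integral_sub_integral_le_mul_wasserstein1 μ ν
        _ = K * wasserstein1 μ ν := by simp
    calc _ = _ := hsplit
      _ ≤ K * wasserstein1 μ ν + n * (K * wasserstein1 μ ν) :=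
        add_le_add hfirst (hfiber ν).integral_pi_sub_integral_pi_le_mul_wasserstein1
      _ = (n + 1 : ℕ) * (K * wasserstein1 μ ν) := by push_cast; ring

end Tensorization

lemma lintegral_thickenedIndicator_le_measure_thickening {Ω : Type*} [PseudoMetricSpace Ω]
    [MeasurableSpace Ω] [OpensMeasurableSpace Ω] (P : Measure Ω) {ε : ℝ} (hε : 0 < ε)
    (A : Set Ω) :
    ∫⁻ x, (thickenedIndicator hε A x : ℝ≥0∞) ∂P ≤ P (thickening ε A) := by
  rw [← lintegral_indicator_one isOpen_thickening.measurableSet]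
  refine lintegral_mono fun x => ?_
  by_cases hx : x ∈ thickening ε A
  · simpa [Set.indicator_of_mem hx] using thickenedIndicator_le_one hε A x
  · simp [Set.indicator_of_notMem hx, thickenedIndicator_zero hε A hx]

lemma measure_le_measure_thickening_add_of_integral_sub_le {Ω : Type*} [PseudoMetricSpace Ω]
    [MeasurableSpace Ω] [OpensMeasurableSpace Ω] {P Q : Measure Ω} [IsFiniteMeasure P]
    [IsFiniteMeasure Q] {ε : ℝ} (hε : 0 < ε) {A : Set Ω} (hA : MeasurableSet A)
    (h : ∫ x, (thickenedIndicator hε A x : ℝ) ∂P - ∫ x, (thickenedIndicator hε A x : ℝ) ∂Q ≤ ε) :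
    P A ≤ Q (thickening ε A) + ENNReal.ofReal ε :=
  calc P A ≤ ∫⁻ x, (thickenedIndicator hε A x : ℝ≥0∞) ∂P :=
        measure_le_lintegral_thickenedIndicator P hA hε
    _ = ENNReal.ofReal (∫ x, (thickenedIndicator hε A x : ℝ) ∂P) :=
        lintegral_coe_eq_integral _ (integrable_thickenedIndicator A hε)
    _ ≤ ENNReal.ofReal (∫ x, (thickenedIndicator hε A x : ℝ) ∂Q + ε) :=
        ENNReal.ofReal_le_ofReal (by linarith)
    _ = ∫⁻ x, (thickenedIndicator hε A x : ℝ≥0∞) ∂Q + ENNReal.ofReal ε := by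
        rw [ENNReal.ofReal_add (integral_nonneg fun x => NNReal.coe_nonneg _) hε.le,
          lintegral_coe_eq_integral _ (integrable_thickenedIndicator A hε)]
    _ ≤ Q (thickening ε A) + ENNReal.ofReal ε := by
        gcongr
        exact lintegral_thickenedIndicator_le_measure_thickening Q hε A

theorem levyProkhorovDist_map_pi_le_sqrt {M B : Type*} [MetricSpace M] [CompactSpace M]
    [MeasurableSpace M] [BorelSpace M] [MetricSpace B] [MeasurableSpace B] [BorelSpace B]
    (μ ν : Measure M) [IsProbabilityMeasure μ] [IsProbabilityMeasure ν] {n : ℕ}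
    {f : (Fin n → M) → B} {L : ℝ≥0} (hf : LipschitzWith L f) :
    levyProkhorovDist (Measure.map f (Measure.pi fun _ => μ))
        (Measure.map f (Measure.pi fun _ => ν)) ≤
      √(n * L * wasserstein1 μ ν) := by
  have hfm : Measurable f := hf.continuous.measurable
  have := Measure.isProbabilityMeasure_map (μ := Measure.pi fun _ : Fin n => μ) hfm.aemeasurable
  have := Measure.isProbabilityMeasure_map (μ := Measure.pi fun _ : Fin n => ν) hfm.aemeasurable
  refine levyProkhorovDist_le_of_forall_le _ _ (Real.sqrt_nonneg _) fun ε A hε hA => ?_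
  have hε₀ : 0 < ε := (Real.sqrt_nonneg _).trans_lt hε
  have hεsq : n * L * wasserstein1 μ ν < ε ^ 2 := (Real.sqrt_lt' hε₀).mp hε
  refine measure_le_measure_thickening_add_of_integral_sub_le hε₀ hA ?_
  rw [integral_map hfm.aemeasurable (by fun_prop), integral_map hfm.aemeasurable (by fun_prop)]
  have hlip : LipschitzWith (ε.toNNReal⁻¹ * L) fun v => (thickenedIndicator hε₀ A (f v) : ℝ) := by
    have := (NNReal.isometry_coe.lipschitz.comp (lipschitzWith_thickenedIndicator hε₀ A)).comp hf
    rwa [one_mul] at this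
  calc _ ≤ n * ((ε.toNNReal⁻¹ * L : ℝ≥0) * wasserstein1 μ ν) :=
        hlip.integral_pi_sub_integral_pi_le_mul_wasserstein1 μ ν
    _ = n * L * wasserstein1 μ ν / ε := by
        rw [NNReal.coe_mul, NNReal.coe_inv, Real.coe_toNNReal _ hε₀.le]
        field_simp
    _ ≤ ε := by
        rw [div_le_iff₀ hε₀]
        nlinarith

instance isProbabilityMeasure_empiricalMeasure {K M : Type*} [Group K] [MeasurableSpace M]
    [MulAction K M] {k ℓ : ℕ} [NeZero k] (g : Fin k → K) (p₀ : M) :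
    IsProbabilityMeasure (empiricalMeasure (ℓ := ℓ) g p₀) := by
  constructor
  simp only [empiricalMeasure, Measure.smul_apply, Measure.coe_finsetSum, Finset.sum_apply,
    measure_univ, Finset.sum_const, Finset.card_univ, nsmul_eq_mul, mul_one, smul_eq_mul]
  exact ENNReal.inv_mul_cancel (by simp [NeZero.ne k]) (ENNReal.natCast_ne_top _)

theorem prokhorov_persistent_homology_bound_general
    {K : Type*} [Group K]
    {M : Type*} [MetricSpace M] [CompactSpace M]
    [MeasurableSpace M] [BorelSpace M]
    [MulAction K M]
    (σM : Measure M) [IsProbabilityMeasure σM]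
    -- the barcode space `ℬ`, metrized by the bottleneck distance
    {B : Type*} [MetricSpace B] [MeasurableSpace B] [BorelSpace B]
    -- a nonempty finite multiset `S ⊆ K` and the word length `ℓ ≥ 1`
    (k : ℕ) (hk : 1 ≤ k) (g : Fin k → K) (ℓ : ℕ) (hℓ : 1 ≤ ℓ) (p₀ : M)
    (n : ℕ) (hn : n = (2 * k) ^ ℓ)
    -- the `q`-th persistent homology map on `n`-tuples of points of `M`,
    (PH : ℕ → (Fin n → M) → B)
    -- satisfying the stability theorem of Chazal et al. for Vietoris–Rips barcodes
    (hPHstab : ∀ q, ∀ v w : Fin n → M,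
      dist (PH q v) (PH q w) ≤ 2 * ⨆ j, dist (v j) (w j)) :
    ∀ q : ℕ,
      (1 / (n : ℝ)) *
        levyProkhorovDist
          (Measure.map (PH q) (Measure.pi fun _ : Fin n => σM))
          (Measure.map (PH q) (Measure.pi fun _ : Fin n => empiricalMeasure (ℓ := ℓ) g p₀))
        ≤ Real.sqrt (wasserstein1 σM (empiricalMeasure (ℓ := ℓ) g p₀)) := by
  intro q
  have : NeZero k := ⟨by omega⟩
  have hPH : LipschitzWith 2 (PH q) := .of_dist_le_mul fun v w =>
    (hPHstab q v w).trans <| by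
      push_cast
      exact mul_le_mul_of_nonneg_left (Real.iSup_le (dist_le_pi_dist v w) dist_nonneg) zero_le_two
  have hn2 : (2 : ℝ) ≤ n := by
    rw [hn]
    exact_mod_cast (show 2 ≤ 2 * k by omega).trans (Nat.le_self_pow (by omega) _)
  set W := wasserstein1 σM (empiricalMeasure (ℓ := ℓ) g p₀)
  have hW : 0 ≤ W := wasserstein1_nonneg _ _
  have hnW : n * 2 * W ≤ (n : ℝ) ^ 2 * W := by
    nlinarith [mul_nonneg (mul_nonneg (Nat.cast_nonneg n) (sub_nonneg.2 hn2)) hW]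
  calc _ ≤ 1 / (n : ℝ) * √(n * 2 * W) := by
        gcongr
        exact_mod_cast levyProkhorovDist_map_pi_le_sqrt σM _ hPH
    _ ≤ √W := by
        rw [one_div, inv_mul_le_iff₀ (by positivity)]
        calc √(n * 2 * W) ≤ √((n : ℝ) ^ 2 * W) := Real.sqrt_le_sqrt hnW
          _ = n * √W := by rw [Real.sqrt_mul (sq_nonneg _), Real.sqrt_sq (by positivity)]

/-- **Prokhorov stability of persistent-homology pushforwards** (Theorem `persistent1`).
`M = K/H` is a compact connected Riemannian symmetric space with `K`-invariant probability
measure `σM`, and `B` is the barcode space with the bottleneck distance; `PH q` sends an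
`n`-tuple of points of `M` to the `q`-th persistent homology barcode of its Vietoris–Rips
filtration (it is measurable and satisfies the Chazal et al. stability bound).  For every
nonempty finite multiset `S ⊆ K` of isometries, every `ℓ ≥ 1` and every `q ≥ 0`, with
`n = |Ŝ|^ℓ = (2k)^ℓ`, `𝒮_ℓ := Ŝ^ℓ p₀` and `σ^M_ℓ` the empirical measure on `𝒮_ℓ`:
`(1/n) · d_Pr(Φ^{q,n}_{M,∂_M,σ^M}, Φ^{q,n}_{𝒮_ℓ,∂_M,σ^M_ℓ}) ≤ W₁(σ^M, σ^M_ℓ)^{1/2}`. -/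
theorem prokhorov_persistent_homology_bound
    {K : Type*} [Group K] [TopologicalSpace K] [IsTopologicalGroup K] [CompactSpace K]
    [MeasurableSpace K] [BorelSpace K]
    {M : Type*} [MetricSpace M] [CompactSpace M] [Nonempty M]
    [MeasurableSpace M] [BorelSpace M]
    [MulAction K M] [ContinuousSMul K M]
    (hIso : ∀ s : K, Isometry fun x : M => s • x)
    (hTrans : ∀ x y : M, ∃ s : K, s • x = y)
    (σM : Measure M) [IsProbabilityMeasure σM]
    (hInvMeas : ∀ s : K, MeasurePreserving (fun x : M => s • x) σM σM)
    -- the barcode space `ℬ`, metrized by the bottleneck distance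
    {B : Type*} [MetricSpace B] [MeasurableSpace B] [BorelSpace B]
    -- a nonempty finite multiset `S ⊆ K` and the word length `ℓ ≥ 1`
    (k : ℕ) (hk : 1 ≤ k) (g : Fin k → K) (ℓ : ℕ) (hℓ : 1 ≤ ℓ) (p₀ : M)
    (n : ℕ) (hn : n = (2 * k) ^ ℓ)
    -- the `q`-th persistent homology map on `n`-tuples of points of `M`,
    (PH : ℕ → (Fin n → M) → B)
    (hPHmeas : ∀ q, Measurable (PH q))
    -- satisfying the stability theorem of Chazal et al. for Vietoris–Rips barcodes
    (hPHstab : ∀ q, ∀ v w : Fin n → M,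
      dist (PH q v) (PH q w) ≤ 2 * ⨆ j, dist (v j) (w j)) :
    ∀ q : ℕ,
      (1 / (n : ℝ)) *
        levyProkhorovDist
          (Measure.map (PH q) (Measure.pi fun _ : Fin n => σM))
          (Measure.map (PH q) (Measure.pi fun _ : Fin n => empiricalMeasure (ℓ := ℓ) g p₀))
        ≤ Real.sqrt (wasserstein1 σM (empiricalMeasure (ℓ := ℓ) g p₀)) :=
  prokhorov_persistent_homology_bound_general σM k hk g ℓ hℓ p₀ n hn PH hPHstab
end

section
/- Let M be a compact connected Riemannian symmetric space of dimension d_M with Riemannian distance ∂_M. For every point m ∈ M there exist an isometric embedding χ_m : (M, ∂_M) → (ℝ^{d_M² + d_M}, ‖·‖₂), a point x₀ ∈ ℝ^{d_M² + d_M}, and a radius R₀ > 0 such that χ_m(M) is contained in the closed Euclidean ball of radius R₀ centered at x₀ and χ_m(m) lies on the boundary sphere of that ball; that is, χ_m(M) is quadratically exposed at χ_m(m). -/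
open Metric Real

/-- **Quadratic exposedness of isometrically embedded symmetric spaces**
(Remark `rotate`).  Let `M` be a compact connected Riemannian symmetric space of dimension
`dM` with Riemannian distance `∂_M`.  By Nash's embedding theorem there is an isometric
embedding `χ : (M, ∂_M) → (ℝ^{d_M²+d_M}, ‖·‖₂)`, and the isometry group of `M` acts
transitively (any point can be moved to any other by a global isometry, e.g. by reversing a
connecting geodesic).  Then for every point `m ∈ M` there are an isometric embedding
`χ_m : M → ℝ^{d_M²+d_M}`, a center `x₀` and a radius `R₀ > 0` such that `χ_m(M)` lies in the
closed ball `B̄_{R₀}(x₀)` and `χ_m(m)` lies on its boundary sphere: `χ_m(M)` is quadratically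
`R₀`-exposed at `χ_m(m)`. -/
theorem quadratically_exposed_embedding
    {M : Type*} [MetricSpace M] [CompactSpace M] [Nonempty M]
    (dM : ℕ) (hdM : 1 ≤ dM)
    -- Nash's isometric embedding of `M` into `ℝ^{d_M² + d_M}`
    (χ : M → EuclideanSpace ℝ (Fin (dM ^ 2 + dM))) (hχ : Isometry χ)
    -- transitivity of the isometry group of `M` (geodesic-reversing isometries)
    (hHomog : ∀ m m' : M, ∃ ζ : M ≃ᵢ M, ζ m = m') :
    ∀ m : M, ∃ (χm : M → EuclideanSpace ℝ (Fin (dM ^ 2 + dM)))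
      (x₀ : EuclideanSpace ℝ (Fin (dM ^ 2 + dM))) (R₀ : ℝ),
        Isometry χm ∧ 0 < R₀ ∧
        (∀ p : M, χm p ∈ closedBall x₀ R₀) ∧
        χm m ∈ sphere x₀ R₀ := by
  intro m
  obtain ⟨m', -, hm'⟩ := isCompact_univ.exists_isMaxOn Set.univ_nonempty
    ((continuous_dist.comp ((hχ.continuous).prodMk continuous_const)).continuousOn :
      ContinuousOn (fun p : M => dist (χ p) (χ m)) Set.univ)
  have hmax : ∀ p : M, dist (χ p) (χ m) ≤ dist (χ m') (χ m) := fun p => hm' (Set.mem_univ p)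
  rcases eq_or_lt_of_le (dist_nonneg : (0:ℝ) ≤ dist (χ m') (χ m)) with h0 | hpos
  · have hi : (0 : ℕ) < dM ^ 2 + dM := by positivity
    have hall : ∀ p : M, χ p = χ m := by
      intro p
      have := hmax p
      rw [← h0] at this
      exact eq_of_dist_eq_zero (le_antisymm this dist_nonneg)
    refine ⟨χ, χ m + EuclideanSpace.single (⟨0, hi⟩ : Fin (dM ^ 2 + dM)) (1:ℝ), 1, hχ,
      one_pos, ?_, ?_⟩
    · intro p
      rw [mem_closedBall, hall p, dist_eq_norm]
      simp [EuclideanSpace.norm_single]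
    · rw [mem_sphere, dist_eq_norm]
      simp [EuclideanSpace.norm_single]
  · obtain ⟨ζ, hζ⟩ := hHomog m m'
    refine ⟨χ ∘ ζ, χ m, dist (χ m') (χ m), hχ.comp ζ.isometry, hpos, ?_, ?_⟩
    · intro p
      exact hmax (ζ p)
    · simp only [Function.comp_apply, hζ, mem_sphere]
end

section
/- Let d ≥ 1 be an integer and ε ∈ (0, 2^{-e}). (i) If an integer k ≥ 0 satisfies 2k ≥ d·log₂(k/ε²), then exp(−2^{(2k+d)/d}·ε²) ≤ e^{−2k}. (ii) If k₀ is an integer with k₀ ≥ (d/2)·log₂(d/(2ε²)) + d·log₂log₂(d/(2ε²)) (and k₀ ≥ (d/2)·log₂(2^e d)), then every integer k ≥ k₀ satisfies 2k ≥ d·log₂(k/ε²), and consequently Σ_{k ≥ k₀} 2^{1+k}·exp(−2^{(2k+d)/d}·ε²) ≤ 4·2^{−k₀}. -/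
/-!
Write `L = log₂(d/(2ε²))` and `t = k/d`, so that `log₂(k/ε²) = 1 + L + log₂ t`. The hypothesis
`ε < 2^{-e}` forces `L > 2e - 1 > 4`, and the threshold on `k₀` says `t ≥ L/2 + log₂ L`. Since
`t ↦ 2t - log₂ t` is increasing on `[1, ∞)`, it suffices to check `1 + L + log₂ t ≤ 2t` at
`t = L/2 + log₂ L`, where it reduces to `L + 2 log₂ L ≤ L²`, true for `L ≥ 4`. Part (i) is
`log₂(k/ε²) ≤ 2k/d` exponentiated, and for `k ≥ k₀` it bounds the summand by
`2 (2/e²)^k ≤ 2 · 2^{-k}`, whose tail from `k₀` is `4 · 2^{-k₀}`.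
-/

open Real

lemma logb_two_sub_logb_two_le {s t : ℝ} (hs : 1 ≤ s) (hst : s ≤ t) :
    logb 2 t - logb 2 s ≤ 2 * (t - s) := by
  have hs0 : 0 < s := by linarith
  have ht0 : 0 < t := by linarith
  have hlog2 : 1 / 2 < log 2 := by linarith [log_two_gt_d9]
  have hquot : log (t / s) ≤ t - s := by
    calc log (t / s) ≤ t / s - 1 := log_le_sub_one_of_pos (by positivity)
      _ = (t - s) / s := by field_simp
      _ ≤ t - s := div_le_self (by linarith) hs
  rw [← logb_div (by positivity) (by positivity), logb, div_le_iff₀ (by linarith)]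
  nlinarith

lemma one_add_add_logb_two_le_two_mul {L t : ℝ} (hL : 4 ≤ L) (ht : L / 2 + logb 2 L ≤ t) :
    1 + L + logb 2 t ≤ 2 * t := by
  have hlogL : 0 ≤ logb 2 L := logb_nonneg one_lt_two (by linarith)
  have hlogL' : logb 2 L ≤ 2 * (L - 1) := by
    simpa using logb_two_sub_logb_two_le le_rfl (by linarith : (1 : ℝ) ≤ L)
  set s := L / 2 + logb 2 L with hs_def
  have hs1 : 1 ≤ s := by linarith
  -- `2s ≤ L²` because `2 log₂ L ≤ 4(L - 1) ≤ L² - L` for `L ≥ 4`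
  have hs : logb 2 (2 * s) ≤ logb 2 (L ^ 2) :=
    logb_le_logb_of_le one_lt_two (by positivity) (by nlinarith)
  rw [logb_mul two_ne_zero (by positivity), logb_self_eq_one one_lt_two, logb_pow] at hs
  push_cast at hs
  linarith [logb_two_sub_logb_two_le hs1 ht]

lemma two_mul_le_two_rpow_mul_of_mul_logb_le {d c k : ℝ} (hd : 0 < d) (hc : 0 < c)
    (hk : d * logb 2 (k / c) ≤ 2 * k) : 2 * k ≤ 2 ^ ((2 * k + d) / d) * c := by
  rcases le_or_gt k 0 with hk0 | hk0
  · have : 0 < (2 : ℝ) ^ ((2 * k + d) / d) * c := by positivity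
    linarith
  have hlog : logb 2 (k / c) ≤ 2 * k / d := by rw [le_div_iff₀ hd]; linarith
  have hkc : k / c ≤ 2 ^ (2 * k / d) := (logb_le_iff_le_rpow one_lt_two (by positivity)).1 hlog
  have hsplit : (2 : ℝ) ^ ((2 * k + d) / d) = 2 * 2 ^ (2 * k / d) := by
    rw [add_div, div_self hd.ne', rpow_add two_pos, rpow_one, mul_comm]
  rw [div_le_iff₀ hc] at hkc
  rw [hsplit]
  linarith

lemma mul_logb_le_two_mul_of_le {d c k : ℝ} (hd : 0 < d) (hc : 0 < c)
    (hL : 4 ≤ logb 2 (d / (2 * c)))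
    (hk : d / 2 * logb 2 (d / (2 * c)) + d * logb 2 (logb 2 (d / (2 * c))) ≤ k) :
    d * logb 2 (k / c) ≤ 2 * k := by
  set L := logb 2 (d / (2 * c))
  have ht : L / 2 + logb 2 L ≤ k / d := by rw [le_div_iff₀ hd]; linarith
  have hk0 : 0 < k / d := by linarith [logb_nonneg one_lt_two (by linarith : (1 : ℝ) ≤ L)]
  have hsplit : logb 2 (k / c) = 1 + L + logb 2 (k / d) := by
    have : k / c = 2 * (d / (2 * c)) * (k / d) := by field_simp
    rw [this, logb_mul (by positivity) hk0.ne', logb_mul two_ne_zero (by positivity),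
      logb_self_eq_one one_lt_two]
  calc d * logb 2 (k / c) ≤ d * (2 * (k / d)) := by
        rw [hsplit]; exact mul_le_mul_of_nonneg_left (one_add_add_logb_two_le_two_mul hL ht) hd.le
    _ = 2 * k := by field_simp

lemma four_le_logb_two_div_two_mul_sq {d ε : ℝ} (hd : 1 ≤ d) (hε : 0 < ε)
    (hε' : ε < 2 ^ (-exp 1)) : 4 ≤ logb 2 (d / (2 * ε ^ 2)) := by
  have hlogε : logb 2 ε < -exp 1 := (logb_lt_iff_lt_rpow one_lt_two hε).2 hε'
  have hlogd : 0 ≤ logb 2 d := logb_nonneg one_lt_two hd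
  rw [logb_div (by positivity) (by positivity), logb_mul two_ne_zero (by positivity),
    logb_self_eq_one one_lt_two, logb_pow]
  push_cast
  linarith [exp_one_gt_d9]

lemma tsum_ite_le_of_le_geometric {f : ℕ → ℝ} {C r : ℝ} (k₀ : ℕ) (hr0 : 0 ≤ r) (hr1 : r < 1)
    (hf0 : ∀ k, k₀ ≤ k → 0 ≤ f k) (hf : ∀ k, k₀ ≤ k → f k ≤ C * r ^ k) :
    ∑' k, (if k₀ ≤ k then f k else 0) ≤ C * r ^ k₀ * (1 - r)⁻¹ := by
  set F : ℕ → ℝ := fun k => if k₀ ≤ k then f k else 0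
  have hshift : ∀ n, F (n + k₀) = f (n + k₀) := fun n => if_pos (Nat.le_add_left k₀ n)
  have hgeom : Summable fun n : ℕ => C * r ^ k₀ * r ^ n :=
    (summable_geometric_of_lt_one hr0 hr1).mul_left _
  have hle : ∀ n, f (n + k₀) ≤ C * r ^ k₀ * r ^ n := fun n => by
    rw [mul_assoc, ← pow_add, add_comm k₀]; exact hf _ (Nat.le_add_left k₀ n)
  have hsum : Summable fun n => f (n + k₀) :=
    hgeom.of_nonneg_of_le (fun n => hf0 _ (Nat.le_add_left k₀ n)) hle
  have hF : Summable F := (summable_nat_add_iff k₀).1 (by simpa only [hshift] using hsum)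
  have hhead : ∑ k ∈ Finset.range k₀, F k = 0 :=
    Finset.sum_eq_zero fun k hk => if_neg (by simpa using hk)
  calc ∑' k, F k = ∑' n, f (n + k₀) := by
        rw [← hF.sum_add_tsum_nat_add k₀, hhead, zero_add]; simp only [hshift]
    _ ≤ ∑' n, C * r ^ k₀ * r ^ n := hsum.tsum_le_tsum hle hgeom
    _ = C * r ^ k₀ * (1 - r)⁻¹ := by rw [tsum_mul_left, tsum_geometric_of_lt_one hr0 hr1]

lemma two_pow_succ_mul_exp_neg_two_mul_le (k : ℕ) :
    (2 : ℝ) ^ (1 + k) * exp (-(2 * k)) ≤ 2 * (1 / 2) ^ k := by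
  have he : 2 * exp (-2) ≤ 1 / 2 := by
    have : (4 : ℝ) ≤ exp 1 * exp 1 := by nlinarith [exp_one_gt_d9]
    rw [← exp_add] at this
    rw [exp_neg, ← div_eq_mul_inv, div_le_iff₀ (exp_pos 2)]
    norm_num at this ⊢
    linarith
  calc (2 : ℝ) ^ (1 + k) * exp (-(2 * k)) = 2 * (2 * exp (-2)) ^ k := by
        rw [show -(2 * (k : ℝ)) = k * (-2) by ring, exp_nat_mul, pow_add, mul_pow]; ring
    _ ≤ 2 * (1 / 2) ^ k := by gcongr

/-- **Elementary tail estimates from the truncation argument** (from the proof of Lemma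
`tail-ineq`).  Let `d ≥ 1` be an integer and `ε ∈ (0, 2^{−e})`.
(i) If an integer `k ≥ 0` satisfies `2k ≥ d log₂(k/ε²)`, then
`exp(−2^{(2k+d)/d} ε²) ≤ e^{−2k}`.
(ii) If an integer `k₀` satisfies `k₀ ≥ (d/2) log₂(d/(2ε²)) + d log₂log₂(d/(2ε²))` and
`k₀ ≥ (d/2) log₂(2^e d)`, then every integer `k ≥ k₀` satisfies `2k ≥ d log₂(k/ε²)`, and
consequently `Σ_{k ≥ k₀} 2^{1+k} exp(−2^{(2k+d)/d} ε²) ≤ 4 · 2^{−k₀}`. -/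
theorem truncation_tail_elementary_estimates
    (d : ℕ) (hd : 1 ≤ d) (ε : ℝ) (hε : 0 < ε) (hε' : ε < (2 : ℝ) ^ (-(Real.exp 1))) :
    -- (i)
    (∀ k : ℕ, (d : ℝ) * Real.logb 2 ((k : ℝ) / ε ^ 2) ≤ 2 * (k : ℝ) →
      Real.exp (-((2 : ℝ) ^ ((2 * (k : ℝ) + d) / (d : ℝ)) * ε ^ 2))
        ≤ Real.exp (-(2 * (k : ℝ)))) ∧
    -- (ii)
    (∀ k₀ : ℕ,
      ((d : ℝ) / 2) * Real.logb 2 ((d : ℝ) / (2 * ε ^ 2))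
          + (d : ℝ) * Real.logb 2 (Real.logb 2 ((d : ℝ) / (2 * ε ^ 2))) ≤ (k₀ : ℝ) →
      ((d : ℝ) / 2) * Real.logb 2 ((2 : ℝ) ^ (Real.exp 1) * (d : ℝ)) ≤ (k₀ : ℝ) →
      (∀ k : ℕ, k₀ ≤ k → (d : ℝ) * Real.logb 2 ((k : ℝ) / ε ^ 2) ≤ 2 * (k : ℝ)) ∧
      (∑' k : ℕ, if k₀ ≤ k then
          (2 : ℝ) ^ (1 + k) * Real.exp (-((2 : ℝ) ^ ((2 * (k : ℝ) + d) / (d : ℝ)) * ε ^ 2))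
        else 0) ≤ 4 * (2 : ℝ) ^ (-(k₀ : ℝ))) := by
  have hd0 : (0 : ℝ) < d := by exact_mod_cast hd
  have hε2 : 0 < ε ^ 2 := by positivity
  have part_i : ∀ k : ℕ, (d : ℝ) * logb 2 (k / ε ^ 2) ≤ 2 * k →
      exp (-(2 ^ ((2 * (k : ℝ) + d) / d) * ε ^ 2)) ≤ exp (-(2 * k)) := fun k hk =>
    exp_le_exp.2 (neg_le_neg (two_mul_le_two_rpow_mul_of_mul_logb_le hd0 hε2 hk))
  refine ⟨part_i, fun k₀ hk₀ _ => ?_⟩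
  have hL := four_le_logb_two_div_two_mul_sq (by exact_mod_cast hd : (1 : ℝ) ≤ d) hε hε'
  have part_ii : ∀ k : ℕ, k₀ ≤ k → (d : ℝ) * logb 2 (k / ε ^ 2) ≤ 2 * k := fun k hk =>
    mul_logb_le_two_mul_of_le hd0 hε2 hL (hk₀.trans (by exact_mod_cast hk))
  refine ⟨part_ii, ?_⟩
  calc _ ≤ 2 * (1 / 2 : ℝ) ^ k₀ * (1 - 1 / 2)⁻¹ :=
        tsum_ite_le_of_le_geometric k₀ (by norm_num) (by norm_num) (fun k _ => by positivity)
          fun k hk => (mul_le_mul_of_nonneg_left (part_i k (part_ii k hk)) (by positivity)).trans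
            (two_pow_succ_mul_exp_neg_two_mul_le k)
    _ = 4 * (2 : ℝ) ^ (-(k₀ : ℝ)) := by
        rw [rpow_neg two_pos.le, rpow_natCast, one_div, inv_pow]; ring
end
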